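/- Let a, δ, γ₀, ε be real numbers with ε ≠ 0. Set s := √(γ₀² + ε²), λ := √((aδ + γ₀)² + ε²), φ := λ + aδ + γ₀, and N := √(φ² + ε²). Define the real 2×2 matrices H₀ := !![γ₀, ε; ε, −γ₀], H₁ := !![γ₀ + aδ, ε; ε, −(γ₀ + aδ)], ρ := (1/(2s)) • !![s − γ₀, −ε; −ε, s + γ₀], and u := (1/N) • !![−ε, φ; φ, ε]. Let ρᴱ := uᵀ · ρ · u and let ρ_diag be the diagonal matrix with the same diagonal entries as ρᴱ. Then (1/2) · trace( ρ_diag · (uᵀ·H₁·u − uᵀ·H₀·u) ) = − a δ (aδ + γ₀) (aδγ₀ + γ₀² + ε²) / ( 2 s ((aδ + γ₀)² + ε²) ). -/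

import Mathlib

/-!
Let `g = γ₀ + aδ`, `λ = √(g² + ε²)`. The matrix `u` is orthogonal, and for every `γ` the diagonal
entries of `uᵀ !![γ, ε; ε, -γ] u` are `∓ c_γ` with `c_γ = (γ g + ε²) / λ`, the overlap of the
Bloch vectors `(γ, ε)` and `(g, ε)` divided by `λ`; for `γ = g` these are the eigenvalues `∓λ` of
`H₁`. Since `ρ = (1 - H₀ / s) / 2`, the diagonal of `ρᴱ` is `(1 ± c / s) / 2` with `c = c_{γ₀}`,
so the invariant work is `-c (λ - c) / (2 s)`, and `λ - c = aδ g / λ`.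
-/

open Matrix

theorem Matrix.trace_diagonal_diag_mul {n R : Type*} [Fintype n] [DecidableEq n]
    [NonUnitalNonAssocSemiring R] (A B : Matrix n n R) :
    trace (diagonal (fun i => A i i) * B) = ∑ i, A i i * B i i := by
  simp only [trace, diag, diagonal_mul]

theorem Matrix.transpose_mul_smul_sub_mul {n R : Type*} [Fintype n] [DecidableEq n] [CommRing R]
    (c s : R) (u H : Matrix n n R) (hu : uᵀ * u = 1) :
    uᵀ * (c • (s • 1 - H)) * u = c • (s • 1 - uᵀ * H * u) := by
  rw [Matrix.mul_smul, Matrix.smul_mul, Matrix.mul_sub, Matrix.sub_mul, Matrix.mul_smul,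
    Matrix.smul_mul, Matrix.mul_one, hu, Matrix.mul_assoc]

namespace LandauZener

def hamiltonian (γ ε : ℝ) : Matrix (Fin 2) (Fin 2) ℝ := !![γ, ε; ε, -γ]

noncomputable def energy (γ ε : ℝ) : ℝ := √(γ ^ 2 + ε ^ 2)

noncomputable def eigenbasis (γ ε : ℝ) : Matrix (Fin 2) (Fin 2) ℝ :=
  let φ := energy γ ε + γ
  (1 / √(φ ^ 2 + ε ^ 2)) • !![-ε, φ; φ, ε]

variable {g ε : ℝ}

theorem energy_sq (g ε : ℝ) : energy g ε ^ 2 = g ^ 2 + ε ^ 2 :=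
  Real.sq_sqrt (by positivity)

theorem energy_pos (hε : ε ≠ 0) : 0 < energy g ε :=
  Real.sqrt_pos.2 (by positivity)

theorem sqrt_sq_energy_add_sq (g ε : ℝ) :
    √((energy g ε + g) ^ 2 + ε ^ 2) ^ 2 = 2 * energy g ε * (energy g ε + g) := by
  rw [Real.sq_sqrt (by positivity)]
  linear_combination -energy_sq g ε

theorem eigenbasis_transpose_mul_self (hε : ε ≠ 0) :
    (eigenbasis g ε)ᵀ * eigenbasis g ε = 1 := by
  ext i j
  fin_cases i <;> fin_cases j <;>
    simp only [eigenbasis, one_div, smul_of, smul_cons, smul_eq_mul, smul_empty, Fin.isValue,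
      Fin.zero_eta, Fin.mk_one, mul_apply, transpose_apply, of_apply, cons_val', cons_val_zero,
      cons_val_one, cons_val_fin_one, Fin.sum_univ_two, one_apply_eq, ne_eq, zero_ne_one,
      one_ne_zero, not_false_eq_true, one_apply_ne] <;> field_simp <;>
    rw [Real.sq_sqrt (by positivity)] <;> ring

theorem eigenbasis_conj_hamiltonian_zero_zero (hε : ε ≠ 0) (γ : ℝ) :
    ((eigenbasis g ε)ᵀ * hamiltonian γ ε * eigenbasis g ε) 0 0 = -(γ * g + ε ^ 2) / energy g ε := by
  have hE := energy_pos (g := g) hε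
  simp only [eigenbasis, hamiltonian, one_div, smul_of, smul_cons, smul_eq_mul, smul_empty,
    Fin.isValue, mul_apply, transpose_apply, of_apply, cons_val', cons_val_zero, cons_val_one,
    cons_val_fin_one, Fin.sum_univ_two]
  field_simp
  rw [sqrt_sq_energy_add_sq]
  linear_combination (-γ * energy g ε) * energy_sq g ε

theorem eigenbasis_conj_hamiltonian_one_one (hε : ε ≠ 0) (γ : ℝ) :
    ((eigenbasis g ε)ᵀ * hamiltonian γ ε * eigenbasis g ε) 1 1 = (γ * g + ε ^ 2) / energy g ε := by
  have hE := energy_pos (g := g) hε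
  simp only [eigenbasis, hamiltonian, one_div, smul_of, smul_cons, smul_eq_mul, smul_empty,
    Fin.isValue, mul_apply, transpose_apply, of_apply, cons_val', cons_val_zero, cons_val_one,
    cons_val_fin_one, Fin.sum_univ_two]
  field_simp
  rw [sqrt_sq_energy_add_sq]
  linear_combination (γ * energy g ε) * energy_sq g ε

end LandauZener

open LandauZener in
theorem landauZener_invariant_work (a δ γ₀ ε : ℝ) (hε : ε ≠ 0) :
    let s : ℝ := Real.sqrt (γ₀ ^ 2 + ε ^ 2)
    let lam : ℝ := Real.sqrt ((a * δ + γ₀) ^ 2 + ε ^ 2)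
    let φ : ℝ := lam + a * δ + γ₀
    let N : ℝ := Real.sqrt (φ ^ 2 + ε ^ 2)
    let H₀ : Matrix (Fin 2) (Fin 2) ℝ := !![γ₀, ε; ε, -γ₀]
    let H₁ : Matrix (Fin 2) (Fin 2) ℝ := !![γ₀ + a * δ, ε; ε, -(γ₀ + a * δ)]
    let ρ : Matrix (Fin 2) (Fin 2) ℝ := (1 / (2 * s)) • !![s - γ₀, -ε; -ε, s + γ₀]
    let u : Matrix (Fin 2) (Fin 2) ℝ := (1 / N) • !![-ε, φ; φ, ε]
    let ρE : Matrix (Fin 2) (Fin 2) ℝ := uᵀ * ρ * u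
    let ρdiag : Matrix (Fin 2) (Fin 2) ℝ := Matrix.diagonal (fun i => ρE i i)
    (1 / 2) * Matrix.trace (ρdiag * (uᵀ * H₁ * u - uᵀ * H₀ * u))
      = -(a * δ * (a * δ + γ₀) * (a * δ * γ₀ + γ₀ ^ 2 + ε ^ 2)) /
          (2 * s * ((a * δ + γ₀) ^ 2 + ε ^ 2)) := by
  intro s lam φ N H₀ H₁ ρ u ρE ρdiag
  set g := a * δ + γ₀
  have hs : 0 < s := Real.sqrt_pos.2 (by positivity)
  have hE := energy_pos (g := g) hε
  have hu : u = eigenbasis g ε := by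
    simp only [u, N, φ, lam, eigenbasis, energy, g, add_assoc]
  have hH₀ : H₀ = hamiltonian γ₀ ε := rfl
  have hH₁ : H₁ = hamiltonian g ε := by simp only [H₁, hamiltonian, g, add_comm]
  have hρ : ρ = (1 / (2 * s)) • (s • 1 - hamiltonian γ₀ ε) := by
    simp only [ρ, hamiltonian]
    congr 1
    ext i j
    fin_cases i <;> fin_cases j <;> simp
  have hρE : ρE = (1 / (2 * s)) • (s • 1 - uᵀ * H₀ * u) := by
    rw [hH₀, ← transpose_mul_smul_sub_mul _ _ u _ (hu ▸ eigenbasis_transpose_mul_self hε), ← hρ]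
  rw [trace_diagonal_diag_mul, Fin.sum_univ_two, hρE, hH₀, hH₁, hu]
  simp only [Matrix.sub_apply, Matrix.smul_apply, one_apply_eq, smul_eq_mul,
    eigenbasis_conj_hamiltonian_zero_zero hε, eigenbasis_conj_hamiltonian_one_one hε]
  field_simp
  rw [energy_sq]
  ring
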